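/- arXiv:1606.00267 — 8 statements merged into one kernel-verified Lean document; each statement's English description precedes it below -/
import Mathlib

section
/- For every n ≥ 0, C_n = (-1)^{n+1} · (4^n(2n-1)/(n+1)!) · ∑_{m=0}^n (1/2)^m · S₁(n, m), where S₁(n,m) are the (signed) Stirling numbers of the first kind defined by x(x-1)···(x-n+1) = ∑_{m=0}^n S₁(n,m) x^m. -/
open Finset Polynomial

/-- Signed Stirling numbers of the first kind: coefficients of the falling factorial
`x(x-1)⋯(x-n+1) = ∑ S₁(n,m) x^m`. -/
noncomputable def stirling1 (n m : ℕ) : ℚ :=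
  (∏ i ∈ Finset.range n, (Polynomial.X - Polynomial.C (i : ℚ))).coeff m

lemma catalan_rec (n : ℕ) :
    ((n : ℚ) + 2) * catalan (n + 1) = 2 * (2 * n + 1) * catalan n := by
  have h1 := succ_mul_catalan_eq_centralBinom (n + 1)
  have h2 := succ_mul_catalan_eq_centralBinom n
  have h3 := Nat.succ_mul_centralBinom_succ n
  have key : (n + 1) * ((n + 2) * catalan (n + 1)) = (n + 1) * (2 * (2 * n + 1) * catalan n) := by
    calc (n + 1) * ((n + 2) * catalan (n + 1)) = (n + 1) * ((n + 1 + 1) * catalan (n + 1)) := by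
          ring_nf
      _ = (n + 1) * (n + 1).centralBinom := by rw [h1]
      _ = 2 * (2 * n + 1) * n.centralBinom := h3
      _ = 2 * (2 * n + 1) * ((n + 1) * catalan n) := by rw [h2]
      _ = (n + 1) * (2 * (2 * n + 1) * catalan n) := by ring
  have := Nat.eq_of_mul_eq_mul_left (Nat.succ_pos n) key
  have := congrArg (fun x : ℕ => (x : ℚ)) this
  push_cast at this
  linarith

lemma catalan_prod (n : ℕ) :
    (catalan n : ℚ) = (-1) ^ (n + 1) * (4 ^ n * (2 * (n : ℚ) - 1) / ((n + 1).factorial : ℚ)) *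
      ∏ i ∈ Finset.range n, ((1 : ℚ) / 2 - i) := by
  induction n with
  | zero => simp [catalan]
  | succ n ih =>
    have hrec := catalan_rec n
    have hfac : (((n + 2).factorial : ℚ)) = ((n : ℚ) + 2) * ((n + 1).factorial : ℚ) := by
      rw [show n + 2 = (n + 1) + 1 from rfl, Nat.factorial_succ]
      push_cast; ring
    have hprod : ∏ i ∈ Finset.range (n + 1), ((1 : ℚ) / 2 - i)
        = (∏ i ∈ Finset.range n, ((1 : ℚ) / 2 - i)) * ((1 : ℚ) / 2 - n) := by
      rw [Finset.prod_range_succ]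
    have hf1 : (((n + 1).factorial : ℚ)) ≠ 0 := by positivity
    have hf2 : (((n + 2).factorial : ℚ)) ≠ 0 := by positivity
    have h2n : (2 * (n : ℚ) - 1) ≠ 0 := by
      intro h
      have : (n : ℚ) = 1 / 2 := by linarith
      rcases n with _ | k
      · norm_num at this
      · push_cast at this; linarith [Nat.cast_nonneg (α := ℚ) k]
    have hcat : (catalan (n + 1) : ℚ) = 2 * (2 * n + 1) * catalan n / ((n : ℚ) + 2) := by
      field_simp
      linarith [hrec]
    rw [hcat, ih, hprod]
    rw [show n + 1 + 1 = n + 2 from rfl, hfac]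
    have hn2 : ((n : ℚ) + 2) ≠ 0 := by positivity
    push_cast
    field_simp
    ring

/-- `C_n = (-1)^{n+1} · 4^n(2n-1)/(n+1)! · ∑_{m=0}^n (1/2)^m S₁(n,m)`. -/
theorem catalan_eq_stirling1_sum (n : ℕ) :
    (catalan n : ℚ) = (-1) ^ (n + 1) * (4 ^ n * (2 * (n : ℚ) - 1) / ((n + 1).factorial : ℚ)) *
      ∑ m ∈ Finset.range (n + 1), ((1 : ℚ) / 2) ^ m * stirling1 n m := by
  have hdeg : (∏ i ∈ Finset.range n, (Polynomial.X - Polynomial.C (i : ℚ))).natDegree < n + 1 := by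
    have : (∏ i ∈ Finset.range n, (Polynomial.X - Polynomial.C (i : ℚ))).natDegree = n := by
      rw [Polynomial.natDegree_prod _ _ (fun i _ => Polynomial.X_sub_C_ne_zero _)]
      simp only [Polynomial.natDegree_X_sub_C, Finset.sum_const, Finset.card_range, smul_eq_mul,
        mul_one]
    omega
  have heval := Polynomial.eval_eq_sum_range' hdeg ((1 : ℚ) / 2)
  have hsum : ∑ m ∈ Finset.range (n + 1), ((1 : ℚ) / 2) ^ m * stirling1 n m
      = (∏ i ∈ Finset.range n, (Polynomial.X - Polynomial.C (i : ℚ))).eval ((1 : ℚ) / 2) := by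
    rw [heval]
    apply Finset.sum_congr rfl
    intro m _
    rw [stirling1, mul_comm]
  rw [hsum, Polynomial.eval_prod]
  simp only [Polynomial.eval_sub, Polynomial.eval_X, Polynomial.eval_C]
  exact catalan_prod n
end

section
/- Define the λ-Changhee numbers with λ = 1/2 by Ch_{n,1/2} = (-1)^n · n! · C_n / 4^n, where C_n is the n-th Catalan number. Then for every n ≥ 1, Ch_{n,1/2} = ∑_{m=0}^n binom(n,m) · C_m · Ch_{n-m,1/2} · (-1)^m · (m+1)! / (4^m(2m-1)), and Ch_{0,1/2} = 1. -/
open Finset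

/-- The `1/2`-Changhee numbers `Ch_{n,1/2} = (-1)^n n! C_n / 4^n`. -/
noncomputable def changheeHalf (n : ℕ) : ℚ :=
  (-1) ^ n * (n.factorial : ℚ) * (catalan n : ℚ) / 4 ^ n

lemma cbq (m : ℕ) : ((m : ℚ) + 1) * (catalan m : ℚ) = (Nat.centralBinom m : ℚ) := by
  exact_mod_cast succ_mul_catalan_eq_centralBinom m

lemma centralBinom_succ_q (j : ℕ) :
    (Nat.centralBinom (j + 1) : ℚ) = 2 * (2 * j + 1) * (catalan j : ℚ) := by
  have h1 : ((j : ℚ) + 1) * (Nat.centralBinom (j + 1) : ℚ)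
      = 2 * (2 * j + 1) * (Nat.centralBinom j : ℚ) := by
    exact_mod_cast Nat.succ_mul_centralBinom_succ j
  have hj : ((j : ℚ) + 1) ≠ 0 := by positivity
  apply mul_left_cancel₀ hj
  rw [h1, ← cbq j]
  ring

lemma two_m_sub_one_ne (m : ℕ) : 2 * (m : ℚ) - 1 ≠ 0 := by
  rcases m with _ | j
  · norm_num
  · push_cast
    have hj : (0:ℚ) ≤ (j:ℚ) := by positivity
    intro h
    linarith

lemma term_eq (n m : ℕ) (hm : m ≤ n) :
    (n.choose m : ℚ) * (catalan m : ℚ) * changheeHalf (n - m) * (-1) ^ m *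
      ((m + 1).factorial : ℚ) / (4 ^ m * (2 * (m : ℚ) - 1)) =
    ((-1) ^ n * (n.factorial : ℚ) / 4 ^ n) *
      ((Nat.centralBinom m : ℚ) / (2 * (m : ℚ) - 1)) * (catalan (n - m) : ℚ) := by
  unfold changheeHalf
  have hc : (n.choose m : ℚ) = n.factorial / (m.factorial * (n - m).factorial) :=
    Nat.cast_choose ℚ hm
  have hfact : ((m + 1).factorial : ℚ) = ((m : ℚ) + 1) * m.factorial := by
    push_cast [Nat.factorial_succ]; ring
  have hsign : (-1 : ℚ) ^ (n - m) * (-1) ^ m = (-1) ^ n := by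
    rw [← pow_add, Nat.sub_add_cancel hm]
  have h4 : (4 : ℚ) ^ (n - m) * 4 ^ m = 4 ^ n := by
    rw [← pow_add, Nat.sub_add_cancel hm]
  have hmf : (m.factorial : ℚ) ≠ 0 := by positivity
  have hnmf : ((n - m).factorial : ℚ) ≠ 0 := by positivity
  have h4m : (4 : ℚ) ^ m ≠ 0 := by positivity
  have h4nm : (4 : ℚ) ^ (n - m) ≠ 0 := by positivity
  have h2m := two_m_sub_one_ne m
  rw [← cbq m, hc, hfact]
  field_simp
  rw [← h4, ← hsign]
  ring

lemma key_sum (k : ℕ) :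
    ∑ m ∈ Finset.range (k + 1 + 1),
      ((Nat.centralBinom m : ℚ) / (2 * (m : ℚ) - 1)) * (catalan (k + 1 - m) : ℚ)
      = (catalan (k + 1) : ℚ) := by
  rw [Finset.sum_range_succ']
  have h0 : ((Nat.centralBinom 0 : ℚ) / (2 * ((0 : ℕ) : ℚ) - 1)) * (catalan (k + 1 - 0) : ℚ)
      = -(catalan (k + 1) : ℚ) := by
    simp [Nat.centralBinom]
  rw [h0]
  have hterm : ∀ j ∈ Finset.range (k + 1),
      ((Nat.centralBinom (j + 1) : ℚ) / (2 * ((j + 1 : ℕ) : ℚ) - 1)) * (catalan (k + 1 - (j + 1)) : ℚ)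
      = 2 * ((catalan j : ℚ) * (catalan (k - j) : ℚ)) := by
    intro j _
    rw [centralBinom_succ_q j]
    have hne : 2 * (((j : ℚ) + 1)) - 1 ≠ 0 := by
      have := two_m_sub_one_ne (j + 1); push_cast at this ⊢; linarith [this]
    have : k + 1 - (j + 1) = k - j := by omega
    rw [this]
    push_cast
    field_simp
    ring
  rw [Finset.sum_congr rfl hterm, ← Finset.mul_sum]
  have hcat : (∑ j ∈ Finset.range (k + 1), (catalan j : ℚ) * (catalan (k - j) : ℚ))
      = (catalan (k + 1) : ℚ) := by
    rw [catalan_succ]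
    push_cast
    rw [Finset.sum_range]
  rw [hcat]
  ring

theorem changheeHalf_recurrence :
    (∀ n : ℕ, 1 ≤ n →
      changheeHalf n = ∑ m ∈ Finset.range (n + 1),
        (n.choose m : ℚ) * (catalan m : ℚ) * changheeHalf (n - m) * (-1) ^ m *
          ((m + 1).factorial : ℚ) / (4 ^ m * (2 * (m : ℚ) - 1))) ∧
    changheeHalf 0 = 1 := by
  constructor
  · intro n hn
    obtain ⟨k, rfl⟩ : ∃ k, n = k + 1 := ⟨n - 1, by omega⟩
    have hrw : ∀ m ∈ Finset.range (k + 1 + 1),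
        ((k+1).choose m : ℚ) * (catalan m : ℚ) * changheeHalf (k + 1 - m) * (-1) ^ m *
          ((m + 1).factorial : ℚ) / (4 ^ m * (2 * (m : ℚ) - 1))
        = ((-1) ^ (k+1) * ((k+1).factorial : ℚ) / 4 ^ (k+1)) *
          ((Nat.centralBinom m : ℚ) / (2 * (m : ℚ) - 1)) * (catalan (k + 1 - m) : ℚ) := by
      intro m hm
      exact term_eq (k + 1) m (by simpa using Nat.lt_succ_iff.mp (Finset.mem_range.mp hm))
    rw [Finset.sum_congr rfl hrw]
    simp_rw [mul_assoc]
    rw [← Finset.mul_sum, key_sum k]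
    unfold changheeHalf
    ring
  · unfold changheeHalf
    simp
end

section
/- For every n ≥ 0, with Ch_{n,1/2} := (-1)^n n! C_n / 4^n, one has Ch_{n,1/2} = ∑_{m=0}^n 2^{-m} E_m S₁(n,m), where E_m are the Euler numbers and S₁(n,m) the signed Stirling numbers of the first kind. -/
/-!
Let `L` be the linear functional on `ℚ[X]` with `L (X ^ m) = E m / 2 ^ m`, so that the right-hand
side is `a n = L (X)ₙ` for the falling factorial `(X)ₙ`. The defining relation of the Euler
numbers reads `L (p (X + 1/2)) + L p = 2 p(0)`. Expanding `(X + 1/2)ₙ` by Chu–Vandermonde turns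
this into `A * (D + 1) = 2` for the exponential generating functions `A` of `a` and `D` of
`(1/2)ₙ`, and `D * D = 1 + t` since `D` is the binomial series of `√(1 + t)`. Hence
`t A² + 4 A = 4`. This equation has a unique power-series solution, and the rescaled Catalan series
`∑ Cₙ (-t/4)ⁿ = ∑ Ch_{n,1/2} tⁿ / n!` is one.
-/

open Finset Polynomial

section ExponentialGeneratingFunction

variable {K : Type*} [Field K]

lemma natCast_factorial_ne_zero [CharZero K] (n : ℕ) : (n.factorial : K) ≠ 0 :=
  Nat.cast_ne_zero.mpr n.factorial_ne_zero

noncomputable def egf (f : ℕ → K) : PowerSeries K :=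
  PowerSeries.mk fun n => f n / n.factorial

@[simp]
lemma coeff_egf (f : ℕ → K) (n : ℕ) : PowerSeries.coeff n (egf f) = f n / n.factorial :=
  PowerSeries.coeff_mk _ _

lemma egf_injective [CharZero K] : Function.Injective (egf (K := K)) := by
  intro f g h
  funext n
  have hn := congrArg (PowerSeries.coeff n) h
  rwa [coeff_egf, coeff_egf, div_left_inj' (natCast_factorial_ne_zero n)] at hn

lemma egf_mul [CharZero K] (f g : ℕ → K) :
    egf f * egf g = egf fun n => ∑ ij ∈ antidiagonal n, (n.choose ij.1 : K) * f ij.1 * g ij.2 := by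
  ext n
  rw [PowerSeries.coeff_mul, coeff_egf, Finset.sum_div]
  refine Finset.sum_congr rfl fun ⟨i, j⟩ hij => ?_
  obtain rfl : i + j = n := mem_antidiagonal.mp hij
  rw [coeff_egf, coeff_egf, Nat.cast_add_choose]
  have hfac := natCast_factorial_ne_zero (K := K) (i + j)
  field_simp

lemma egf_add (f g : ℕ → K) : egf f + egf g = egf (f + g) := by
  ext n
  simp [add_div]

lemma egf_one [CharZero K] : egf (fun _ => (1 : K)) = PowerSeries.exp K := by
  ext n
  simp [PowerSeries.coeff_exp]

lemma egf_ite_zero (c : K) : egf (fun n => if n = 0 then c else 0) = PowerSeries.C c := by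
  ext n
  rcases eq_or_ne n 0 with rfl | hn <;> simp [PowerSeries.coeff_C, *]

end ExponentialGeneratingFunction

section UmbralEvaluation

variable {R : Type*} [CommSemiring R]

noncomputable def umbralEval (a : ℕ → R) : R[X] →ₗ[R] R :=
  Polynomial.lsum fun m => a m • LinearMap.id

lemma umbralEval_monomial (a : ℕ → R) (m : ℕ) (c : R) :
    umbralEval a (monomial m c) = c * a m := by
  simp [umbralEval, mul_comm]

lemma umbralEval_C_mul (a : ℕ → R) (c : R) (p : R[X]) :
    umbralEval a (C c * p) = c * umbralEval a p := by
  rw [← smul_eq_C_mul, map_smul, smul_eq_mul]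

lemma umbralEval_eq_sum_range (a : ℕ → R) {p : R[X]} {N : ℕ} (hp : p.natDegree < N) :
    umbralEval a p = ∑ m ∈ range N, p.coeff m * a m := by
  rw [umbralEval, Polynomial.lsum_apply, Polynomial.sum_over_range' _ (by simp) N hp]
  simp [mul_comm]

end UmbralEvaluation

section EulerNumbers

variable {K : Type*} [Field K] [CharZero K] {E : ℕ → K}

lemma sum_choose_mul_add_eq_of_egf_mul_exp_add_one (hE : egf E * (PowerSeries.exp K + 1) = 2)
    (m : ℕ) :
    ∑ ij ∈ antidiagonal m, (m.choose ij.1 : K) * E ij.1 + E m = if m = 0 then 2 else 0 := by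
  have h : egf (fun n => ∑ ij ∈ antidiagonal n, (n.choose ij.1 : K) * E ij.1 + E n) =
      egf fun n => if n = 0 then 2 else 0 := by
    rw [egf_ite_zero, map_ofNat, ← hE, ← egf_one, mul_add, mul_one, egf_mul, egf_add]
    simp only [mul_one]
    rfl
  exact congrFun (egf_injective h) m

lemma umbralEval_X_add_half_pow (m : ℕ) :
    umbralEval (fun k => E k / 2 ^ k) ((X + C (1 / 2 : K)) ^ m) =
      (∑ ij ∈ antidiagonal m, (m.choose ij.1 : K) * E ij.1) / 2 ^ m := by
  rw [(Commute.all _ _).add_pow', map_sum, Finset.sum_div]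
  refine Finset.sum_congr rfl fun ⟨i, j⟩ hij => ?_
  obtain rfl : i + j = m := mem_antidiagonal.mp hij
  rw [← C_pow, nsmul_eq_mul, ← C_eq_natCast, ← mul_assoc, mul_right_comm, ← C_mul,
    C_mul_X_pow_eq_monomial, umbralEval_monomial, pow_add, one_div, inv_pow]
  field_simp

lemma umbralEval_comp_X_add_half_add (hE : egf E * (PowerSeries.exp K + 1) = 2) (p : K[X]) :
    umbralEval (fun k => E k / 2 ^ k) (p.comp (X + C (1 / 2))) +
      umbralEval (fun k => E k / 2 ^ k) p = 2 * p.eval 0 := by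
  induction p using Polynomial.induction_on' with
  | add p q hp hq =>
    simp only [add_comp, map_add, eval_add]
    linear_combination hp + hq
  | monomial m c =>
    have h := sum_choose_mul_add_eq_of_egf_mul_exp_add_one hE m
    rw [← C_mul_X_pow_eq_monomial, mul_comp, C_comp, X_pow_comp, umbralEval_C_mul,
      umbralEval_C_mul, umbralEval_X_add_half_pow, ← monomial_one_right_eq_X_pow,
      umbralEval_monomial, eval_mul, eval_C, eval_monomial]
    rcases eq_or_ne m 0 with rfl | hm
    · simp only [if_true] at h
      simp only [pow_zero, div_one]
      linear_combination c * h
    · simp only [hm, if_false] at h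
      simp only [zero_pow hm]
      field_simp
      linear_combination c * h

end EulerNumbers

theorem descPochhammer_comp_X_add_C {R : Type*} [CommRing R] (a : R) (n : ℕ) :
    (descPochhammer R n).comp (X + C a) = ∑ ij ∈ antidiagonal n,
      (n.choose ij.1 : R[X]) * (descPochhammer R ij.1 * C ((descPochhammer R ij.2).eval a)) := by
  have smeval_eq_comp (k : ℕ) (q : R[X]) :
      (descPochhammer ℤ k).smeval q = (descPochhammer R k).comp q := by
    rw [← aeval_eq_smeval, ← aeval_map_algebraMap R, descPochhammer_map, comp_eq_aeval]
  rw [← smeval_eq_comp, Ring.descPochhammer_smeval_add n (Commute.all _ _)]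
  simp only [smeval_eq_comp, comp_X, comp_C]

lemma prod_range_X_sub_C_eq_descPochhammer {R : Type*} [CommRing R] (n : ℕ) :
    ∏ i ∈ range n, (X - C (i : R)) = descPochhammer R n := by
  induction n with
  | zero => simp
  | succ n ih => rw [prod_range_succ, ih, descPochhammer_succ_right, C_eq_natCast]

section HalfFallingFactorial

variable {K : Type*} [Field K] [CharZero K]

lemma egf_eval_half_descPochhammer_mul_self :
    egf (fun n => (descPochhammer K n).eval (1 / 2)) *
      egf (fun n => (descPochhammer K n).eval (1 / 2)) = 1 + PowerSeries.X := by
  rw [egf_mul]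
  ext n
  have h := congrArg (eval (1 / 2 : K)) (descPochhammer_comp_X_add_C (1 / 2 : K) n)
  simp only [eval_comp, eval_add, eval_X, eval_C, eval_finsetSum, eval_mul, eval_natCast] at h
  rw [coeff_egf, map_add, PowerSeries.coeff_one, PowerSeries.coeff_X]
  simp only [← mul_assoc] at h
  rw [← h, add_halves]
  match n with
  | 0 => simp
  | 1 => simp
  | n + 2 =>
    have h1 := descPochhammer_eval_coe_nat_of_lt (R := K) (show 1 < n + 2 by omega)
    rw [Nat.cast_one] at h1
    simp [h1]

lemma egf_umbralEval_descPochhammer_mul_add_one {E : ℕ → K}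
    (hE : egf E * (PowerSeries.exp K + 1) = 2) :
    egf (fun n => umbralEval (fun k => E k / 2 ^ k) (descPochhammer K n)) *
      (egf (fun n => (descPochhammer K n).eval (1 / 2)) + 1) = 2 := by
  have hn (n : ℕ) := umbralEval_comp_X_add_half_add hE (descPochhammer K n)
  simp only [descPochhammer_comp_X_add_C, map_sum, ← C_eq_natCast, umbralEval_C_mul,
    mul_comm (descPochhammer K _) (C _), descPochhammer_eval_zero, mul_ite, mul_one,
    mul_zero] at hn
  rw [mul_add, mul_one, egf_mul, egf_add, ← map_ofNat PowerSeries.C, ← egf_ite_zero]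
  congr 1
  funext n
  rw [Pi.add_apply, ← hn n]
  congr 1
  exact Finset.sum_congr rfl fun _ _ => by ring

end HalfFallingFactorial

lemma eq_of_X_mul_sq_add_four_mul_eq_four {K : Type*} [Field K] [CharZero K]
    {f g : PowerSeries K} (hf : PowerSeries.X * f ^ 2 + 4 * f = 4)
    (hg : PowerSeries.X * g ^ 2 + 4 * g = 4) : f = g := by
  have hprod : (f - g) * (PowerSeries.X * (f + g) + 4) = 0 := by linear_combination hf - hg
  have hne : PowerSeries.X * (f + g) + 4 ≠ 0 := by
    intro h
    have h0 := congrArg PowerSeries.constantCoeff h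
    rw [map_add, map_mul, PowerSeries.constantCoeff_X, zero_mul, zero_add, map_ofNat,
      map_zero] at h0
    norm_num at h0
  exact sub_eq_zero.mp ((mul_eq_zero.mp hprod).resolve_right hne)

lemma egf_changheeHalf : egf changheeHalf = PowerSeries.rescale (-1 / 4 : ℚ)
    (PowerSeries.map (Nat.castRingHom ℚ) PowerSeries.catalanSeries) := by
  ext n
  rw [coeff_egf, PowerSeries.coeff_rescale, PowerSeries.coeff_map, PowerSeries.catalanSeries_coeff,
    changheeHalf, Nat.coe_castRingHom, div_pow]
  have hfac := natCast_factorial_ne_zero (K := ℚ) n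
  field_simp

lemma X_mul_egf_changheeHalf_sq_add_four_mul :
    PowerSeries.X * egf changheeHalf ^ 2 + 4 * egf changheeHalf = 4 := by
  have h := congrArg
    (fun f => PowerSeries.rescale (-1 / 4 : ℚ) (PowerSeries.map (Nat.castRingHom ℚ) f))
    PowerSeries.catalanSeries_sq_mul_X_add_one
  simp only [map_add, map_mul, map_pow, PowerSeries.map_X, PowerSeries.rescale_X, map_one] at h
  have hC : PowerSeries.C (-1 / 4 : ℚ) * 4 = -1 := by
    rw [← map_ofNat PowerSeries.C 4, ← map_mul]
    norm_num
  rw [← egf_changheeHalf] at h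
  linear_combination (-4) * h + PowerSeries.X * egf changheeHalf ^ 2 * hC

/-- `Ch_{n,1/2} = ∑_{m=0}^n 2^{-m} E_m S₁(n,m)` for Euler numbers `E`. -/
theorem changheeHalf_eq_sum_euler_stirling1 (E : ℕ → ℚ)
    (hE : (PowerSeries.mk fun m => E m / (m.factorial : ℚ)) * (PowerSeries.exp ℚ + 1) = 2)
    (n : ℕ) :
    changheeHalf n = ∑ m ∈ Finset.range (n + 1), ((2 : ℚ) ^ m)⁻¹ * E m * stirling1 n m := by
  set A : ℕ → ℚ := fun k => umbralEval (fun m => E m / 2 ^ m) (descPochhammer ℚ k)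
  set D := egf fun k => (descPochhammer ℚ k).eval (1 / 2 : ℚ)
  have hA : egf A * (D + 1) = 2 := egf_umbralEval_descPochhammer_mul_add_one hE
  have hD : D * D = 1 + PowerSeries.X := egf_eval_half_descPochhammer_mul_self
  have hAC : A = changheeHalf := egf_injective <| eq_of_X_mul_sq_add_four_mul_eq_four
    (by linear_combination (egf A * D - egf A + 2) * hA - egf A ^ 2 * hD)
    X_mul_egf_changheeHalf_sq_add_four_mul
  rw [← congrFun hAC n]
  dsimp only [A]
  rw [umbralEval_eq_sum_range _ (N := n + 1) (by rw [descPochhammer_natDegree]; omega)]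
  refine Finset.sum_congr rfl fun m _ => ?_
  rw [stirling1, prod_range_X_sub_C_eq_descPochhammer]
  ring
end

section
/- For every n ≥ 0, C_n = ((-1)^n / n!) · ∑_{m=0}^n 2^{2n-m} · E_m · S₁(n,m), where E_m are Euler numbers and S₁(n,m) signed Stirling numbers of the first kind. -/
/-! Let `L` be the linear functional on `ℚ[X]` with `L (X ^ m) = E m`. The generating function
of the Euler numbers says exactly that `L (f (X + 1)) + L f = 2 f(0)`, hence
`L (f (X + 2)) - L f = 2 (f(1) - f(0))`. The sum in the theorem is `4 ^ n L (Q n)` for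
`Q n = (X/2) (X/2 - 1) ⋯ (X/2 - n + 1)`, and `Q (n + 1) (X + 2) - Q (n + 1) = (n + 1) Q n`; so
`(n + 1) L (Q n) = 2 Q (n + 1) (1) = 2 (1/2) (-1/2) ⋯ (1/2 - n) = (-1/4) ^ n n! binom(2n, n)`. -/

open Finset Polynomial

theorem PowerSeries.sum_choose_mul_add_self_of_mk_mul_exp_add_one {K : Type*} [Field K]
    [CharZero K] (a : ℕ → K)
    (h : (PowerSeries.mk fun m => a m / m.factorial) * (PowerSeries.exp K + 1) = 2)
    (k : ℕ) :
    ∑ j ∈ range (k + 1), (k.choose j : K) * a j + a k = if k = 0 then 2 else 0 := by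
  rw [← map_ofNat PowerSeries.C] at h
  have hk := congrArg (fun p => (k.factorial : K) * PowerSeries.coeff k p) h
  simp only [mul_add, mul_one, map_add, PowerSeries.coeff_mul, PowerSeries.coeff_C,
    Finset.Nat.sum_antidiagonal_eq_sum_range_succ_mk, PowerSeries.coeff_mk, PowerSeries.coeff_exp,
    map_div₀, map_one, map_natCast, Finset.mul_sum] at hk
  convert hk using 2
  · refine sum_congr rfl fun j hj => ?_
    rw [Nat.cast_choose K (Nat.lt_succ_iff.mp (mem_range.mp hj))]
    field_simp
  · have := k.factorial_ne_zero
    field_simp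
  · split_ifs with hk0 <;> simp [hk0]

namespace Polynomial

section CommRing

variable {R : Type*} [CommRing R]

noncomputable def momentFunctional (a : ℕ → R) : R[X] →ₗ[R] R :=
  lsum fun m => a m • LinearMap.id

variable (a : ℕ → R)

@[simp]
lemma momentFunctional_monomial (k : ℕ) (c : R) : momentFunctional a (monomial k c) = c * a k :=
  (sum_monomial_index c _ (by simp)).trans (mul_comm _ _)

lemma momentFunctional_eq_sum_range {f : R[X]} {N : ℕ} (hN : f.natDegree < N) :
    momentFunctional a f = ∑ m ∈ range N, a m * f.coeff m :=
  sum_over_range' f (by simp) N hN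

lemma momentFunctional_comp_X_add_one_add
    (ha : ∀ k, ∑ j ∈ range (k + 1), (k.choose j : R) * a j + a k = if k = 0 then 2 else 0)
    (f : R[X]) : momentFunctional a (f.comp (X + 1)) + momentFunctional a f = 2 * f.eval 0 := by
  induction f using Polynomial.induction_on' with
  | add p q hp hq =>
    simp only [add_comp, map_add, eval_add]
    linear_combination hp + hq
  | monomial k c =>
    have hdeg : ((X + 1 : R[X]) ^ k).natDegree < k + 1 := by
      have hX : (X + 1 : R[X]).natDegree ≤ 1 := by
        rw [← C_1, natDegree_add_C]
        exact natDegree_X_le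
      have := natDegree_pow_le_of_le k hX
      omega
    have hshift :
        momentFunctional a ((X + 1) ^ k) = ∑ j ∈ range (k + 1), (k.choose j : R) * a j := by
      rw [momentFunctional_eq_sum_range a hdeg]
      exact sum_congr rfl fun j _ => by rw [coeff_X_add_one_pow, mul_comm]
    rw [monomial_comp, ← smul_eq_C_mul, map_smul, hshift, momentFunctional_monomial, eval_monomial,
      smul_eq_mul, ← mul_add, ha k]
    split_ifs with hk <;> simp [hk, mul_comm]

lemma momentFunctional_comp_X_add_two
    (ha : ∀ k, ∑ j ∈ range (k + 1), (k.choose j : R) * a j + a k = if k = 0 then 2 else 0)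
    (f : R[X]) :
    momentFunctional a (f.comp (X + 2)) = momentFunctional a f + 2 * (f.eval 1 - f.eval 0) := by
  have hstep := momentFunctional_comp_X_add_one_add a ha f
  have hstep' := momentFunctional_comp_X_add_one_add a ha (f.comp (X + 1))
  rw [comp_assoc, show (X + 1 : R[X]).comp (X + 1) = X + 2 by simp; ring, eval_comp] at hstep'
  simp only [eval_add, eval_X, eval_one, zero_add] at hstep'
  linear_combination hstep' - hstep

end CommRing

lemma descPochhammer_succ_comp_X_add_one_sub {R : Type*} [CommRing R] (n : ℕ) :
    (descPochhammer R (n + 1)).comp (X + 1) - descPochhammer R (n + 1)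
      = (n + 1 : R[X]) * descPochhammer R n := by
  have hcomp : (descPochhammer R (n + 1)).comp (X + 1) = (X + 1) * descPochhammer R n := by
    rw [descPochhammer_succ_left, mul_comp, X_comp, comp_assoc]
    simp
  rw [hcomp, descPochhammer_succ_right]
  ring

section Field

variable {K : Type*} [Field K] [CharZero K]

theorem momentFunctional_descPochhammer_comp_half (a : ℕ → K)
    (ha : ∀ k, ∑ j ∈ range (k + 1), (k.choose j : K) * a j + a k = if k = 0 then 2 else 0)
    (n : ℕ) :
    (n + 1) * momentFunctional a ((descPochhammer K n).comp (C 2⁻¹ * X))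
      = 2 * (descPochhammer K (n + 1)).eval 2⁻¹ := by
  set f := (descPochhammer K (n + 1)).comp (C 2⁻¹ * X)
  have hhalf : (C 2⁻¹ * X : K[X]).comp (X + 2) = (X + 1).comp (C 2⁻¹ * X) := by
    simp only [mul_comp, C_comp, X_comp, add_comp, one_comp]
    rw [mul_add, ← C_ofNat, ← C_mul, inv_mul_cancel₀ two_ne_zero, C_1]
  have hdiff : f.comp (X + 2) - f = (n + 1 : K) • (descPochhammer K n).comp (C 2⁻¹ * X) := by
    rw [comp_assoc, hhalf, ← comp_assoc, ← sub_comp, descPochhammer_succ_comp_X_add_one_sub,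
      mul_comp, smul_eq_C_mul]
    simp
  have hshift := momentFunctional_comp_X_add_two a ha f
  rw [← sub_eq_iff_eq_add', ← map_sub, hdiff, map_smul, smul_eq_mul] at hshift
  simpa [f, eval_comp] using hshift

theorem neg_four_pow_mul_descPochhammer_eval_half (n : ℕ) :
    (-4 : K) ^ n * (2 * (descPochhammer K (n + 1)).eval 2⁻¹) = n.factorial * n.centralBinom := by
  induction n with
  | zero => simp
  | succ n ih =>
    have hcb : ((n : K) + 1) * (n + 1).centralBinom = 2 * (2 * n + 1) * n.centralBinom := by
      exact_mod_cast Nat.succ_mul_centralBinom_succ n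
    rw [descPochhammer_succ_eval, Nat.factorial_succ]
    push_cast
    linear_combination (-4 * (2⁻¹ - (n + 1 : K))) * ih - (n.factorial : K) * hcb

end Field

lemma descPochhammer_eq_prod_range (R : Type*) [CommRing R] (n : ℕ) :
    descPochhammer R n = ∏ i ∈ range n, (X - C (i : R)) := by
  induction n with
  | zero => simp
  | succ n ih => rw [descPochhammer_succ_right, ih, prod_range_succ, C_eq_natCast]

lemma sum_two_pow_mul_stirling1 (a : ℕ → ℚ) (n : ℕ) :
    ∑ m ∈ range (n + 1), (2 : ℚ) ^ (2 * n - m) * a m * stirling1 n m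
      = 4 ^ n * momentFunctional a ((descPochhammer ℚ n).comp (C 2⁻¹ * X)) := by
  have hdeg : ((descPochhammer ℚ n).comp (C 2⁻¹ * X)).natDegree < n + 1 := by
    rw [natDegree_comp, descPochhammer_natDegree, natDegree_C_mul_X _ (by norm_num), mul_one]
    exact n.lt_succ_self
  rw [momentFunctional_eq_sum_range a hdeg, mul_sum]
  refine sum_congr rfl fun m hm => ?_
  rw [comp_C_mul_X_coeff, stirling1, ← descPochhammer_eq_prod_range,
    pow_sub₀ _ two_ne_zero (by have := mem_range.mp hm; omega), pow_mul, inv_pow]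
  ring

end Polynomial

/-- `C_n = ((-1)^n/n!) ∑_{m=0}^n 2^{2n-m} E_m S₁(n,m)` for Euler numbers `E`. -/
theorem catalan_eq_sum_euler_stirling1 (E : ℕ → ℚ)
    (hE : (PowerSeries.mk fun m => E m / (m.factorial : ℚ)) * (PowerSeries.exp ℚ + 1) = 2)
    (n : ℕ) :
    (catalan n : ℚ) = (-1) ^ n / (n.factorial : ℚ) *
      ∑ m ∈ Finset.range (n + 1), (2 : ℚ) ^ (2 * n - m) * E m * stirling1 n m := by
  have hL := momentFunctional_descPochhammer_comp_half E
    (PowerSeries.sum_choose_mul_add_self_of_mk_mul_exp_add_one E hE) n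
  have hval := neg_four_pow_mul_descPochhammer_eval_half (K := ℚ) n
  have hcat : ((n : ℚ) + 1) * catalan n = n.centralBinom := by
    exact_mod_cast succ_mul_catalan_eq_centralBinom n
  have hfac : (n.factorial : ℚ) * catalan n
      = (-4) ^ n * momentFunctional E ((descPochhammer ℚ n).comp (C 2⁻¹ * X)) :=
    mul_left_cancel₀ n.cast_add_one_ne_zero <| by
      linear_combination (n.factorial : ℚ) * hcat - (-4 : ℚ) ^ n * hL - hval
  rw [neg_pow] at hfac
  rw [sum_two_pow_mul_stirling1, div_mul_eq_mul_div, eq_div_iff (by positivity)]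
  linear_combination hfac
end

section
/- The fermionic p-adic integral of the binomial coefficient function x ↦ binom(x/2, n) over ℤ_p equals (-1)^n C_n / 4^n = (-1)^n binom(2n,n)/(4^n(n+1)); equivalently, for each n ≥ 0 the limit lim_{N→∞} ∑_{x=0}^{p^N - 1} (-1)^x binom(x/2, n) = (-1)^n C_n / 4^n in ℚ_p (p an odd prime). -/
open Finset Filter

private lemma prod_half_aux (p : ℕ) [Fact p.Prime] (n : ℕ) :
    (∏ i ∈ Finset.range (n+1), ((1:ℚ_[p])/2 - (i:ℚ_[p])))
      = (-1)^n * (n.centralBinom : ℚ_[p]) * (n.factorial : ℚ_[p]) / (2 * 4^n) := by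
  induction n with
  | zero => simp [Nat.centralBinom]
  | succ n ih =>
    rw [Finset.prod_range_succ, ih]
    have h : ((n:ℚ_[p]) + 1) * ((n+1).centralBinom : ℚ_[p])
        = 2 * (2*(n:ℚ_[p])+1) * (n.centralBinom : ℚ_[p]) := by
      exact_mod_cast Nat.succ_mul_centralBinom_succ n
    have hn1 : ((n:ℚ_[p]) + 1) ≠ 0 := Nat.cast_add_one_ne_zero n
    have hcb : ((n+1).centralBinom : ℚ_[p])
        = 2 * (2*(n:ℚ_[p])+1) * (n.centralBinom : ℚ_[p]) / ((n:ℚ_[p])+1) := by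
      rw [eq_div_iff hn1]; linear_combination h
    rw [hcb]
    push_cast [Nat.factorial_succ]
    field_simp
    ring


private lemma prod_shift_aux (p : ℕ) [Fact p.Prime] (t : ℚ_[p]) (k : ℕ) :
    ∏ i ∈ Finset.range (k+1), (t + 1 - (i:ℚ_[p]))
      = (t + 1) * ∏ i ∈ Finset.range k, (t - (i:ℚ_[p])) := by
  induction k with
  | zero => simp
  | succ m ih =>
    rw [Finset.prod_range_succ, ih, Finset.prod_range_succ]
    push_cast
    ring

/-- The fermionic p-adic integral of `x ↦ binom(x/2, n)` equals `(-1)^n C_n / 4^n`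
(p an odd prime). -/
theorem fermionic_integral_half_choose (p : ℕ) [Fact p.Prime] (hp : p ≠ 2) (n : ℕ) :
    Filter.Tendsto
      (fun N : ℕ => ∑ x ∈ Finset.range (p ^ N),
        (-1 : ℚ_[p]) ^ x *
          ((∏ i ∈ Finset.range n, (((x : ℤ_[p]) : ℚ_[p]) / 2 - (i : ℚ_[p]))) /
            (n.factorial : ℚ_[p])))
      Filter.atTop
      (nhds ((-1) ^ n * (catalan n : ℚ_[p]) / 4 ^ n)) := by
  have hfn : ((n+1).factorial : ℚ_[p]) ≠ 0 := Nat.cast_ne_zero.2 (Nat.factorial_ne_zero _)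
  have hfn0 : ((n).factorial : ℚ_[p]) ≠ 0 := Nat.cast_ne_zero.2 (Nat.factorial_ne_zero _)
  set g : ℚ_[p] → ℚ_[p] := fun y =>
    (∏ i ∈ Finset.range (n+1), ((y+1)/2 - (i:ℚ_[p]))) / ((n+1).factorial : ℚ_[p])
    - (∏ i ∈ Finset.range (n+1), (y/2 - (i:ℚ_[p]))) / ((n+1).factorial : ℚ_[p]) with hg
  -- key anti-difference identity
  have key : ∀ y : ℚ_[p],
      g y + g (y+1) = (∏ i ∈ Finset.range n, (y/2 - (i:ℚ_[p]))) / (n.factorial : ℚ_[p]) := by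
    intro y
    have h1 : ∏ i ∈ Finset.range (n+1), ((y+1+1)/2 - (i:ℚ_[p]))
        = ∏ i ∈ Finset.range (n+1), (y/2 + 1 - (i:ℚ_[p])) := by
      apply Finset.prod_congr rfl; intro i _; ring
    have h2 : ∏ i ∈ Finset.range (n+1), (y/2 + 1 - (i:ℚ_[p]))
        = (y/2 + 1) * ∏ i ∈ Finset.range n, (y/2 - (i:ℚ_[p])) := prod_shift_aux p (y/2) n
    have h3 : ∏ i ∈ Finset.range (n+1), (y/2 - (i:ℚ_[p]))
        = (∏ i ∈ Finset.range n, (y/2 - (i:ℚ_[p]))) * (y/2 - n) := Finset.prod_range_succ _ _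
    have h4 : ((n+1).factorial : ℚ_[p]) = ((n:ℚ_[p])+1) * (n.factorial : ℚ_[p]) := by
      push_cast [Nat.factorial_succ]; ring
    have hn1 : ((n:ℚ_[p]) + 1) ≠ 0 := Nat.cast_add_one_ne_zero n
    have expand : g y + g (y+1)
        = ((y/2 + 1) * (∏ i ∈ Finset.range n, (y/2 - (i:ℚ_[p])))
            - (∏ i ∈ Finset.range n, (y/2 - (i:ℚ_[p]))) * (y/2 - n)) / ((n+1).factorial : ℚ_[p]) := by
      simp only [hg]
      rw [h1, h2, h3]
      ring
    rw [expand, h4, div_eq_div_iff (mul_ne_zero hn1 hfn0) hfn0]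
    ring
  -- telescoping sum
  have hoddp : Odd p := (Fact.out : p.Prime).odd_of_ne_two hp
  have hsum : ∀ N : ℕ, ∑ x ∈ Finset.range (p ^ N),
      (-1 : ℚ_[p]) ^ x *
        ((∏ i ∈ Finset.range n, (((x : ℤ_[p]) : ℚ_[p]) / 2 - (i : ℚ_[p]))) /
          (n.factorial : ℚ_[p]))
      = g 0 + g ((p:ℚ_[p]) ^ N) := by
    intro N
    have hterm : ∀ x : ℕ, (-1 : ℚ_[p]) ^ x *
        ((∏ i ∈ Finset.range n, (((x : ℤ_[p]) : ℚ_[p]) / 2 - (i : ℚ_[p]))) /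
          (n.factorial : ℚ_[p]))
        = (fun x : ℕ => (-1:ℚ_[p])^x * g x) x - (fun x : ℕ => (-1:ℚ_[p])^x * g x) (x+1) := by
      intro x
      have hc : (((x : ℤ_[p]) : ℚ_[p])) = ((x:ℕ) : ℚ_[p]) := by push_cast; ring
      simp only [hc]
      have := key ((x:ℕ) : ℚ_[p])
      push_cast
      rw [← this]
      ring
    calc ∑ x ∈ Finset.range (p ^ N), (-1 : ℚ_[p]) ^ x *
          ((∏ i ∈ Finset.range n, (((x : ℤ_[p]) : ℚ_[p]) / 2 - (i : ℚ_[p]))) /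
            (n.factorial : ℚ_[p]))
        = ∑ x ∈ Finset.range (p ^ N),
            ((fun x : ℕ => (-1:ℚ_[p])^x * g x) x - (fun x : ℕ => (-1:ℚ_[p])^x * g x) (x+1)) :=
          Finset.sum_congr rfl (fun x _ => hterm x)
      _ = (-1:ℚ_[p])^(0:ℕ) * g 0 - (-1:ℚ_[p])^(p^N) * g (p^N : ℕ) :=
          Finset.sum_range_sub' _ _
      _ = g 0 + g ((p:ℚ_[p]) ^ N) := by
          rw [Odd.neg_one_pow (hoddp.pow)]
          push_cast
          ring
  -- continuity of g and limit of p^N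
  have hgc : Continuous g := by
    apply Continuous.sub <;> apply Continuous.div_const <;>
      exact continuous_finset_prod _ (fun i _ => by fun_prop)
  have hlim : Tendsto (fun N : ℕ => (p:ℚ_[p]) ^ N) atTop (nhds 0) := by
    apply tendsto_pow_atTop_nhds_zero_of_norm_lt_one
    rw [Padic.norm_p]
    have h1 : (1:ℝ) < (p:ℝ) := by
      exact_mod_cast (Fact.out : p.Prime).one_lt
    rw [inv_lt_one_iff₀]; right; exact h1
  have hT : Tendsto (fun N : ℕ => g 0 + g ((p:ℚ_[p]) ^ N)) atTop (nhds (g 0 + g 0)) := by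
    exact tendsto_const_nhds.add ((hgc.tendsto 0).comp hlim)
  -- final value
  have hval : g 0 + g 0 = (-1) ^ n * (catalan n : ℚ_[p]) / 4 ^ n := by
    have h0 : (∏ i ∈ Finset.range (n+1), ((0:ℚ_[p])/2 - (i:ℚ_[p]))) = 0 := by
      apply Finset.prod_eq_zero (Finset.mem_range.2 (Nat.succ_pos n))
      simp
    have h1 : (∏ i ∈ Finset.range (n+1), (((0:ℚ_[p])+1)/2 - (i:ℚ_[p])))
        = (-1)^n * (n.centralBinom : ℚ_[p]) * (n.factorial : ℚ_[p]) / (2 * 4^n) := by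
      rw [← prod_half_aux p n]
      apply Finset.prod_congr rfl; intro i _; norm_num
    have hcat : (n.centralBinom : ℚ_[p]) = ((n:ℚ_[p])+1) * (catalan n : ℚ_[p]) := by
      exact_mod_cast (succ_mul_catalan_eq_centralBinom n).symm
    have h4 : ((n+1).factorial : ℚ_[p]) = ((n:ℚ_[p])+1) * (n.factorial : ℚ_[p]) := by
      push_cast [Nat.factorial_succ]; ring
    have hn1 : ((n:ℚ_[p]) + 1) ≠ 0 := Nat.cast_add_one_ne_zero n
    have h4n : (4:ℚ_[p])^n ≠ 0 := pow_ne_zero _ (by norm_num)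
    simp only [hg, h0, h1, hcat, h4]
    field_simp
    ring
  rw [← hval]
  have : (fun N : ℕ => ∑ x ∈ Finset.range (p ^ N),
      (-1 : ℚ_[p]) ^ x *
        ((∏ i ∈ Finset.range n, (((x : ℤ_[p]) : ℚ_[p]) / 2 - (i : ℚ_[p]))) /
          (n.factorial : ℚ_[p])))
      = fun N => g 0 + g ((p:ℚ_[p]) ^ N) := funext hsum
  rw [this]
  exact hT
end

section
/- For the fermionic p-adic integral I_{-1} on continuous f : ℤ_p → ℚ_p and any n ∈ ℕ with n ≥ 1, I_{-1}(f(·+n)) + (-1)^{n-1} I_{-1}(f) = 2 ∑_{l=0}^{n-1} (-1)^{n-1-l} f(l). -/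
open Finset Filter

/-- Fermionic p-adic integral identity:
`I₋₁(f(·+n)) + (-1)^{n-1} I₋₁(f) = 2 ∑_{l=0}^{n-1} (-1)^{n-1-l} f(l)` for continuous `f`. -/
theorem fermionic_integral_shift (p : ℕ) [Fact p.Prime] (hp : p ≠ 2)
    (f : ℤ_[p] → ℚ_[p]) (hf : Continuous f) (n : ℕ) (hn : 1 ≤ n) (I J : ℚ_[p])
    (hI : Filter.Tendsto (fun N : ℕ => ∑ x ∈ Finset.range (p ^ N), (-1 : ℚ_[p]) ^ x * f x)
      Filter.atTop (nhds I))
    (hJ : Filter.Tendsto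
      (fun N : ℕ => ∑ x ∈ Finset.range (p ^ N), (-1 : ℚ_[p]) ^ x * f (x + n))
      Filter.atTop (nhds J)) :
    J + (-1 : ℚ_[p]) ^ (n - 1) * I =
      2 * ∑ l ∈ Finset.range n, (-1 : ℚ_[p]) ^ (n - 1 - l) * f l := by
  set A : ℚ_[p] := ∑ l ∈ Finset.range n, (-1 : ℚ_[p]) ^ l * f l with hA
  -- finite identity for any M
  have key : ∀ M : ℕ,
      ∑ x ∈ Finset.range M, (-1 : ℚ_[p]) ^ x * f ((x : ℤ_[p]) + n)
        = (-1 : ℚ_[p]) ^ n *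
          ((∑ y ∈ Finset.range M, (-1 : ℚ_[p]) ^ y * f y) - A
            + ∑ l ∈ Finset.range n, (-1 : ℚ_[p]) ^ (M + l) * f ((M + l : ℕ))) := by
    intro M
    have step1 : ∑ x ∈ Finset.range M, (-1 : ℚ_[p]) ^ x * f ((x : ℤ_[p]) + n)
        = (-1 : ℚ_[p]) ^ n * ∑ x ∈ Finset.range M, (-1 : ℚ_[p]) ^ (n + x) * f ((n + x : ℕ)) := by
      rw [Finset.mul_sum]
      refine Finset.sum_congr rfl fun x _ => ?_
      have hc : ((x : ℤ_[p]) + n) = ((n + x : ℕ) : ℤ_[p]) := by push_cast; ring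
      rw [hc, pow_add, ← mul_assoc, ← mul_assoc, ← pow_add]
      have : (-1 : ℚ_[p]) ^ (n + n) = 1 := by
        rw [← two_mul, pow_mul]; norm_num
      rw [this, one_mul]
    rw [step1]
    congr 1
    have step2 : ∑ x ∈ Finset.range M, (-1 : ℚ_[p]) ^ (n + x) * f ((n + x : ℕ))
        = ∑ y ∈ Finset.Ico n (n + M), (-1 : ℚ_[p]) ^ y * f (y : ℕ) := by
      rw [Finset.sum_Ico_eq_sum_range]
      simp
    rw [step2, Finset.sum_Ico_eq_sub _ (Nat.le_add_right n M)]
    have step3 : ∑ y ∈ Finset.range (n + M), (-1 : ℚ_[p]) ^ y * f (y : ℕ)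
        = (∑ y ∈ Finset.range M, (-1 : ℚ_[p]) ^ y * f y)
          + ∑ l ∈ Finset.range n, (-1 : ℚ_[p]) ^ (M + l) * f ((M + l : ℕ)) := by
      rw [add_comm n M, Finset.sum_range_add]
    rw [step3, hA]
    ring
  -- the boundary sum tends to -A
  have hpn : ∀ N : ℕ, Odd (p ^ N) := by
    intro N
    exact (Nat.Prime.odd_of_ne_two (Fact.out) hp).pow
  have hlim0 : Filter.Tendsto (fun N : ℕ => ((p : ℤ_[p]) ^ N)) Filter.atTop (nhds 0) := by
    apply tendsto_pow_atTop_nhds_zero_of_norm_lt_one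
    rw [PadicInt.norm_p]
    have : (1 : ℝ) < p := by exact_mod_cast (Fact.out : p.Prime).one_lt
    rw [inv_lt_one_iff₀]; right; exact this
  have hT : Filter.Tendsto
      (fun N : ℕ => ∑ l ∈ Finset.range n, (-1 : ℚ_[p]) ^ (p ^ N + l) * f ((p ^ N + l : ℕ)))
      Filter.atTop (nhds (-A)) := by
    have : -A = ∑ l ∈ Finset.range n, -((-1 : ℚ_[p]) ^ l * f l) := by
      rw [hA, ← Finset.sum_neg_distrib]
    rw [this]
    apply tendsto_finset_sum
    intro l _
    have hsign : ∀ N : ℕ, (-1 : ℚ_[p]) ^ (p ^ N + l) = -(-1 : ℚ_[p]) ^ l := by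
      intro N
      rw [pow_add, (hpn N).neg_one_pow, neg_one_mul]
    have hfc : Filter.Tendsto (fun N : ℕ => f ((p ^ N + l : ℕ) : ℤ_[p])) Filter.atTop
        (nhds (f l)) := by
      have harg : Filter.Tendsto (fun N : ℕ => (((p ^ N + l : ℕ) : ℤ_[p]))) Filter.atTop
          (nhds (l : ℤ_[p])) := by
        have : (fun N : ℕ => (((p ^ N + l : ℕ) : ℤ_[p]))) =
            fun N : ℕ => (p : ℤ_[p]) ^ N + (l : ℤ_[p]) := by
          funext N; push_cast; ring
        rw [this]
        have := hlim0.add (tendsto_const_nhds (x := (l : ℤ_[p])))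
        simpa using this
      exact (hf.continuousAt.tendsto).comp harg
    have : Filter.Tendsto (fun N : ℕ => (-1 : ℚ_[p]) ^ (p ^ N + l) * f ((p ^ N + l : ℕ)))
        Filter.atTop (nhds (-(-1 : ℚ_[p]) ^ l * f l)) := by
      simp only [hsign]
      exact (tendsto_const_nhds (x := -(-1 : ℚ_[p]) ^ l)).mul hfc
    simpa [neg_mul] using this
  -- combine
  have hJ' : Filter.Tendsto
      (fun N : ℕ => ∑ x ∈ Finset.range (p ^ N), (-1 : ℚ_[p]) ^ x * f (x + n))
      Filter.atTop (nhds ((-1 : ℚ_[p]) ^ n * (I - A + -A))) := by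
    have : (fun N : ℕ => ∑ x ∈ Finset.range (p ^ N), (-1 : ℚ_[p]) ^ x * f (x + n)) =
        fun N : ℕ => (-1 : ℚ_[p]) ^ n *
          ((∑ y ∈ Finset.range (p ^ N), (-1 : ℚ_[p]) ^ y * f y) - A
            + ∑ l ∈ Finset.range n, (-1 : ℚ_[p]) ^ (p ^ N + l) * f ((p ^ N + l : ℕ))) := by
      funext N
      exact_mod_cast key (p ^ N)
    rw [this]
    exact (tendsto_const_nhds (x := (-1 : ℚ_[p]) ^ n)).mul
      (((hI.sub tendsto_const_nhds).add hT))
  have hJeq : J = (-1 : ℚ_[p]) ^ n * (I - A + -A) := tendsto_nhds_unique hJ hJ'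
  -- final algebra
  obtain ⟨m, rfl⟩ : ∃ m, n = m + 1 := ⟨n - 1, by omega⟩
  have hrhs : ∑ l ∈ Finset.range (m + 1), (-1 : ℚ_[p]) ^ (m + 1 - 1 - l) * f l
      = (-1 : ℚ_[p]) ^ m * A := by
    rw [hA, Finset.mul_sum]
    refine Finset.sum_congr rfl fun l hl => ?_
    have hlm : l ≤ m := by simpa [Nat.lt_succ_iff] using Finset.mem_range.mp hl
    have h1 : (-1 : ℚ_[p]) ^ m * (-1 : ℚ_[p]) ^ l = (-1 : ℚ_[p]) ^ (m + 1 - 1 - l) := by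
      rw [← pow_add, show m + l = (m + 1 - 1 - l) + 2 * l by omega, pow_add, pow_mul]
      norm_num
    rw [← h1]; ring
  rw [hJeq, hrhs]
  have hm1 : (m + 1 - 1) = m := by omega
  rw [hm1, pow_succ]
  ring
end

section
/- For every m ≥ 0 and λ a nonzero rational, E_m(x) = λ^{-m} ∑_{n=0}^m Ch_{n,λ}(x) S₂(m,n), where E_m(x) are the Euler polynomials and Ch_{n,λ}(x) are the λ-Changhee polynomials. -/
/-!
Substituting `t = e^s - 1` into the `λ`-Changhee generating function turns `(1+t)^{λx}` into
`e^{λxs}` and `(1+t)^λ` into `e^{λs}`, so it becomes the Euler generating function evaluated at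
`λs`. On exponential generating functions this substitution is the Stirling transform
`(a_n) ↦ (∑_n S₂(m,n) a_n)_m`, since `(e^s-1)^n / n! = ∑_m S₂(m,n) s^m / m!`; that it sends the
falling factorials `(y)_n` to the powers `y^m` is Newton's expansion, which holds for `y ∈ ℕ` by
iterating forward differences and hence identically. As `e^{λs} + 1` is invertible, comparing
coefficients gives `λ^m E_m = ∑_n S₂(m,n) Ch_{n,λ}`.
-/

open Finset Polynomial

/-- Stirling numbers of the second kind. -/
noncomputable def stirling2 (m n : ℕ) : ℚ :=
  (∑ j ∈ Finset.range (n + 1), (-1) ^ (n - j) * (n.choose j : ℚ) * (j : ℚ) ^ m) /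
    (n.factorial : ℚ)

open scoped Nat

theorem stirling2_eq_fwdDiff_iter (m n : ℕ) :
    stirling2 m n = (fwdDiff 1)^[n] (fun r : ℚ ↦ r ^ m) 0 / n ! := by
  simp [stirling2, fwdDiff_iter_eq_sum_shift, mul_assoc]

theorem stirling2_eq_zero_of_lt {m n : ℕ} (h : m < n) : stirling2 m n = 0 := by
  simp [stirling2_eq_fwdDiff_iter, fwdDiff_iter_pow_eq_zero_of_lt h]

theorem natCast_pow_eq_sum_stirling2_mul_descFactorial (N m : ℕ) :
    (N : ℚ) ^ m = ∑ n ∈ range (m + 1), stirling2 m n * N.descFactorial n := by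
  have hterm : ∀ n, stirling2 m n * N.descFactorial n =
      N.choose n • (fwdDiff 1)^[n] (fun r : ℚ ↦ r ^ m) 0 := by
    intro n
    rw [stirling2_eq_fwdDiff_iter, Nat.descFactorial_eq_factorial_mul_choose, nsmul_eq_mul]
    push_cast
    field_simp
  calc (N : ℚ) ^ m = ∑ n ∈ range (N + 1), stirling2 m n * N.descFactorial n := by
        simpa [hterm] using shift_eq_sum_fwdDiff_iter 1 (fun r : ℚ ↦ r ^ m) N 0
    _ = ∑ n ∈ range (N + m + 1), stirling2 m n * N.descFactorial n :=
        sum_subset (range_subset_range.2 (by omega)) fun n _ hn ↦ by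
          simp [Nat.descFactorial_eq_zero_iff_lt.2 (show N < n by simpa using hn)]
    _ = ∑ n ∈ range (m + 1), stirling2 m n * N.descFactorial n :=
        (sum_subset (range_subset_range.2 (by omega)) fun n _ hn ↦ by
          simp [stirling2_eq_zero_of_lt (show m < n by simpa using hn)]).symm

theorem X_pow_eq_sum_stirling2_mul_descPochhammer (m : ℕ) :
    (X : ℚ[X]) ^ m = ∑ n ∈ range (m + 1), C (stirling2 m n) * descPochhammer ℚ n := by
  refine eq_of_infinite_eval_eq _ _ (Set.infinite_range_of_injective Nat.cast_injective |>.mono ?_)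
  rintro _ ⟨N, rfl⟩
  simp [eval_finsetSum, descPochhammer_eval_eq_descFactorial,
    natCast_pow_eq_sum_stirling2_mul_descFactorial]

theorem pow_eq_sum_stirling2_smul_prod {A : Type*} [CommRing A] [Algebra ℚ A] (y : A) (m : ℕ) :
    y ^ m = ∑ n ∈ range (m + 1), stirling2 m n • ∏ i ∈ range n, (y - i) := by
  have h := congrArg (aeval y) (X_pow_eq_sum_stirling2_mul_descPochhammer m)
  simp only [map_pow, aeval_X, map_sum, map_mul, aeval_C] at h
  rw [h]
  refine sum_congr rfl fun n _ ↦ ?_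
  rw [aeval_def, eval₂_eq_eval_map, descPochhammer_map, descPochhammer_eval_eq_prod_range,
    Algebra.smul_def]

namespace PowerSeries

variable {A : Type*} [CommRing A] [Algebra ℚ A]

noncomputable def egf (a : ℕ → A) : A⟦X⟧ := mk fun n ↦ (n ! : ℚ)⁻¹ • a n

@[simp]
theorem coeff_egf (a : ℕ → A) (n : ℕ) : coeff n (egf a) = (n ! : ℚ)⁻¹ • a n := coeff_mk _ _

theorem egf_injective : Function.Injective (egf : (ℕ → A) → A⟦X⟧) := fun a b h ↦ funext fun n ↦
  smul_right_injective A (inv_ne_zero (Nat.cast_ne_zero.2 n.factorial_ne_zero))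
    (by simpa using congrArg (coeff n) h)

theorem egf_eq_mk_C_mul (a : ℕ → ℚ[X]) : egf a = mk fun n ↦ Polynomial.C (n ! : ℚ)⁻¹ * a n := by
  simp only [egf, Polynomial.smul_eq_C_mul]

theorem rescale_egf (c : A) (a : ℕ → A) : rescale c (egf a) = egf fun n ↦ c ^ n * a n := by
  ext n; simp

theorem isUnit_egf_pow_add_one (c : A) : IsUnit (egf (c ^ ·) + 1) := by
  have h2 : IsUnit (2 : A) := by
    simpa only [map_ofNat] using
      (isUnit_iff_ne_zero.2 (two_ne_zero : (2 : ℚ) ≠ 0)).map (algebraMap ℚ A)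
  rw [isUnit_iff_constantCoeff, map_add, ← coeff_zero_eq_constantCoeff_apply, coeff_egf]
  simpa [one_add_one_eq_two] using h2

theorem coeff_exp_sub_one_pow (m n : ℕ) :
    coeff m ((exp A - 1) ^ n) = algebraMap ℚ A (n ! * stirling2 m n / m !) := by
  have hC : (-1 : A⟦X⟧) = C (-1) := by simp
  rw [sub_eq_add_neg, add_pow, hC]
  simp only [map_sum, ← map_pow, ← map_natCast (C (R := A)), coeff_mul_C,
    exp_pow_eq_rescale_exp, coeff_rescale, coeff_exp]
  rw [stirling2, mul_div_cancel₀ _ (by positivity), sum_div, map_sum]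
  refine sum_congr rfl fun j _ ↦ ?_
  rw [div_eq_mul_one_div (_ * _ * _)]
  simp only [map_mul, map_pow, map_neg, map_one, map_natCast]
  ring

theorem hasSubst_exp_sub_one : HasSubst (exp A - 1) :=
  HasSubst.of_constantCoeff_zero' (by simp)

theorem subst_exp_sub_one_egf (a : ℕ → A) :
    (egf a).subst (exp A - 1) = egf fun m ↦ ∑ n ∈ range (m + 1), stirling2 m n • a n := by
  ext m
  rw [coeff_subst' hasSubst_exp_sub_one, finsum_eq_sum_of_support_subset (s := range (m + 1))]
  · rw [coeff_egf, smul_sum]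
    refine sum_congr rfl fun n _ ↦ ?_
    have hfac : (n ! : ℚ)⁻¹ * (n ! * stirling2 m n / m !) = (m ! : ℚ)⁻¹ * stirling2 m n := by
      field_simp
    simp only [coeff_egf, coeff_exp_sub_one_pow, smul_eq_mul]
    simp only [Algebra.smul_def]
    rw [mul_right_comm, ← map_mul, hfac, map_mul, mul_assoc]
  · refine Function.support_subset_iff'.2 fun n hn ↦ ?_
    rw [coeff_exp_sub_one_pow, stirling2_eq_zero_of_lt (by simpa using hn)]
    simp

theorem subst_exp_sub_one_egf_prod (y : A) :
    (egf fun n ↦ ∏ i ∈ range n, (y - i)).subst (exp A - 1) = egf (y ^ ·) := by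
  simp_rw [subst_exp_sub_one_egf, ← pow_eq_sum_stirling2_smul_prod]

end PowerSeries

/-- If `E` is the sequence of Euler polynomials, `2e^{xt}/(e^t+1) = ∑ E_m(x) t^m/m!`, and
`Ch` the sequence of `λ`-Changhee polynomials, `2(1+t)^{λx}/((1+t)^λ+1) = ∑ Ch_{n,λ}(x) t^n/n!`
(with `(1+t)^λ` the binomial series), then `E_m(x) = λ^{-m} ∑_{n=0}^m Ch_{n,λ}(x) S₂(m,n)`. -/
theorem eulerPoly_eq_sum_changhee_stirling2 (lam : ℚ) (hlam : lam ≠ 0)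
    (E Ch : ℕ → Polynomial ℚ)
    (hE : 2 * (PowerSeries.mk fun m =>
        Polynomial.C ((m.factorial : ℚ))⁻¹ * Polynomial.X ^ m) =
      ((PowerSeries.mk fun m => (Polynomial.C ((m.factorial : ℚ))⁻¹ : Polynomial ℚ)) + 1) *
        PowerSeries.mk fun m => Polynomial.C ((m.factorial : ℚ))⁻¹ * E m)
    (hCh : 2 * (PowerSeries.mk fun n =>
        Polynomial.C ((n.factorial : ℚ))⁻¹ *
          ∏ i ∈ Finset.range n, (Polynomial.C lam * Polynomial.X - Polynomial.C (i : ℚ))) =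
      ((PowerSeries.mk fun n =>
          (Polynomial.C ((∏ i ∈ Finset.range n, (lam - i)) / (n.factorial : ℚ)) :
            Polynomial ℚ)) + 1) *
        PowerSeries.mk fun n => Polynomial.C ((n.factorial : ℚ))⁻¹ * Ch n)
    (m : ℕ) :
    E m = Polynomial.C ((lam ^ m)⁻¹) *
      ∑ n ∈ Finset.range (m + 1), Polynomial.C (stirling2 m n) * Ch n := by
  have hE' : 2 * PowerSeries.egf (X ^ ·) = (PowerSeries.egf 1 + 1) * PowerSeries.egf E := by
    simpa only [PowerSeries.egf_eq_mk_C_mul, Pi.one_apply, mul_one] using hE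
  have hCh' : 2 * PowerSeries.egf (fun n ↦ ∏ i ∈ range n, (C lam * X - (i : ℚ[X]))) =
      (PowerSeries.egf (fun n ↦ ∏ i ∈ range n, (C lam - (i : ℚ[X]))) + 1) *
        PowerSeries.egf Ch := by
    simpa only [PowerSeries.egf_eq_mk_C_mul, div_eq_inv_mul, map_mul, map_prod, map_sub,
      map_natCast] using hCh
  have hEuler := congrArg (PowerSeries.rescale (C lam)) hE'
  simp only [map_mul, map_add, map_one, map_ofNat, PowerSeries.rescale_egf, Pi.one_apply,
    mul_one, ← mul_pow] at hEuler
  have hChanghee := congrArg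
    (PowerSeries.substAlgHom (R := ℚ[X]) (PowerSeries.hasSubst_exp_sub_one (A := ℚ[X]))) hCh'
  simp only [map_mul, map_add, map_one, map_ofNat, PowerSeries.coe_substAlgHom] at hChanghee
  rw [PowerSeries.subst_exp_sub_one_egf_prod, PowerSeries.subst_exp_sub_one_egf_prod,
    PowerSeries.subst_exp_sub_one_egf] at hChanghee
  have hcoeff := congrFun (PowerSeries.egf_injective
    ((PowerSeries.isUnit_egf_pow_add_one _).mul_left_cancel (hEuler.symm.trans hChanghee))) m
  simp only [Polynomial.smul_eq_C_mul] at hcoeff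
  rw [← hcoeff, ← mul_assoc, ← C_pow, ← C_mul, inv_mul_cancel₀ (pow_ne_zero m hlam), C_1, one_mul]
end

section
/- The fermionic p-adic integral ∫_{ℤ_p} binom(x, n) dμ_{-1}(x) = lim_{N→∞} ∑_{x=0}^{p^N-1} (-1)^x binom(x,n) equals (-1)^n / 2^n for every n ≥ 0 (p odd prime). -/
open Finset Filter

variable {p : ℕ} [Fact p.Prime]

noncomputable def Bf (n : ℕ) (y : ℚ_[p]) : ℚ_[p] :=
  (∏ i ∈ Finset.range n, (y - i)) / (n.factorial : ℚ_[p])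

lemma Bf_zero (y : ℚ_[p]) : Bf 0 y = 1 := by simp [Bf]

lemma fact_ne (n : ℕ) : ((n.factorial : ℚ_[p])) ≠ 0 := by
  exact_mod_cast n.factorial_ne_zero

lemma Bf_pascal (j : ℕ) (y : ℚ_[p]) : Bf (j+1) (y+1) = Bf (j+1) y + Bf j y := by
  unfold Bf
  have h1 : ∏ i ∈ range (j+1), (y + 1 - (i : ℚ_[p])) =
      (∏ i ∈ range j, (y - i)) * (y + 1) := by
    rw [Finset.prod_range_succ']
    congr 1
    · apply Finset.prod_congr rfl
      intro i _
      push_cast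
      ring
    · simp
  have h2 : ∏ i ∈ range (j+1), (y - (i : ℚ_[p])) =
      (∏ i ∈ range j, (y - i)) * (y - j) := Finset.prod_range_succ _ _
  rw [h1, h2, Nat.factorial_succ]
  have hj : ((j.factorial : ℚ_[p])) ≠ 0 := fact_ne j
  have hj1 : ((j : ℚ_[p]) + 1) ≠ 0 := by exact_mod_cast (Nat.succ_ne_zero j)
  push_cast
  field_simp
  ring

lemma Bf_at_zero (j : ℕ) : Bf (j+1) (0 : ℚ_[p]) = 0 := by
  unfold Bf
  rw [Finset.prod_eq_zero (Finset.mem_range.2 (Nat.succ_pos j))]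
  · simp
  · simp

noncomputable def Tf (n : ℕ) (y : ℚ_[p]) : ℚ_[p] :=
  ∑ j ∈ Finset.range (n+1), Bf j y * (-1/2 : ℚ_[p])^(n-j)

lemma Tf_zero (n : ℕ) : Tf n (0 : ℚ_[p]) = (-1/2 : ℚ_[p])^n := by
  unfold Tf
  rw [Finset.sum_eq_single 0]
  · simp [Bf_zero]
  · intro j hj hj0
    obtain ⟨k, rfl⟩ := Nat.exists_eq_succ_of_ne_zero hj0
    rw [Bf_at_zero, zero_mul]
  · intro h
    exact absurd (Finset.mem_range.2 (Nat.succ_pos n)) h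

lemma Tf_rec (n : ℕ) (y : ℚ_[p]) : Tf n (y+1) + Tf n y = 2 * Bf n y := by
  induction n with
  | zero => simp [Tf, Bf_zero]; ring
  | succ n ih =>
    have hpeel : ∀ z : ℚ_[p], Tf (n+1) z = Bf (n+1) z + (-1/2) * Tf n z := by
      intro z
      unfold Tf
      rw [Finset.sum_range_succ, Finset.mul_sum]
      rw [Nat.sub_self, pow_zero, mul_one, add_comm]
      congr 1
      apply Finset.sum_congr rfl
      intro j hj
      have hjn : j ≤ n := Nat.lt_succ_iff.1 (Finset.mem_range.1 hj)
      rw [Nat.succ_sub hjn, pow_succ]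
      ring
    rw [hpeel (y+1), hpeel y, Bf_pascal]
    have : (-1/2 : ℚ_[p]) * Tf n (y+1) + (-1/2) * Tf n y = (-1/2) * (Tf n (y+1) + Tf n y) := by ring
    calc Bf (n+1) y + Bf n y + (-1/2) * Tf n (y+1) + (Bf (n+1) y + (-1/2) * Tf n y)
        = 2 * Bf (n+1) y + Bf n y + (-1/2) * (Tf n (y+1) + Tf n y) := by ring
      _ = 2 * Bf (n+1) y := by rw [ih]; ring

lemma key_identity (n : ℕ) : ∀ M : ℕ,
    ∑ x ∈ Finset.range M, (-1 : ℚ_[p]) ^ x * Bf n x =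
      (-1)^n / 2^(n+1) + (-1 : ℚ_[p])^(M+1) / 2 * Tf n M := by
  intro M
  induction M with
  | zero =>
    rw [Finset.sum_range_zero, Nat.cast_zero, Tf_zero, div_pow]
    have h2 : (2 : ℚ_[p]) ≠ 0 := two_ne_zero
    field_simp
    ring
  | succ M ih =>
    rw [Finset.sum_range_succ, ih]
    have hc : ((M + 1 : ℕ) : ℚ_[p]) = (M : ℚ_[p]) + 1 := by push_cast; ring
    rw [hc]
    have hrec := Tf_rec n (M : ℚ_[p])
    have hT : Tf n ((M : ℚ_[p]) + 1) = 2 * Bf n M - Tf n M := by linear_combination hrec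
    rw [hT]
    rw [pow_succ ((-1 : ℚ_[p])) (M+1), pow_succ ((-1 : ℚ_[p])) M]
    ring

lemma Bf_continuous (j : ℕ) : Continuous (Bf (p := p) j) := by
  unfold Bf
  apply Continuous.div_const
  exact continuous_finset_prod _ (fun i _ => (continuous_id.sub continuous_const))

lemma Tf_continuous (n : ℕ) : Continuous (Tf (p := p) n) := by
  unfold Tf
  exact continuous_finset_sum _ fun j _ => (Bf_continuous j).mul continuous_const

/-- The fermionic p-adic integral of `x ↦ binom(x,n)` equals `(-1)^n/2^n` (p odd prime). -/
theorem fermionic_integral_choose (p : ℕ) [Fact p.Prime] (hp : p ≠ 2) (n : ℕ) :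
    Filter.Tendsto
      (fun N : ℕ => ∑ x ∈ Finset.range (p ^ N),
        (-1 : ℚ_[p]) ^ x *
          ((∏ i ∈ Finset.range n, (((x : ℤ_[p]) : ℚ_[p]) - (i : ℚ_[p]))) /
            (n.factorial : ℚ_[p])))
      Filter.atTop
      (nhds ((-1) ^ n / 2 ^ n)) := by
  have hfact : ∀ (x : ℕ), (-1 : ℚ_[p]) ^ x *
      ((∏ i ∈ Finset.range n, (((x : ℤ_[p]) : ℚ_[p]) - (i : ℚ_[p]))) / (n.factorial : ℚ_[p]))
      = (-1 : ℚ_[p])^x * Bf n (x : ℚ_[p]) := by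
    intro x
    simp only [Bf, PadicInt.coe_natCast]
  have hodd : ∀ N : ℕ, ((-1 : ℚ_[p]))^(p^N+1) = 1 := by
    intro N
    have hpo : Odd p := (Fact.out (p := p.Prime)).odd_of_ne_two hp
    exact (hpo.pow).add_one.neg_one_pow
  have hkey : ∀ N : ℕ, ∑ x ∈ Finset.range (p^N), (-1 : ℚ_[p])^x * Bf n (x : ℚ_[p]) =
      (-1)^n/2^(n+1) + 1/2 * Tf n ((p^N : ℕ) : ℚ_[p]) := by
    intro N
    rw [key_identity n (p^N), hodd N, one_div]
  have hlim0 : Tendsto (fun N : ℕ => ((p^N : ℕ) : ℚ_[p])) atTop (nhds 0) := by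
    have hc : ∀ N : ℕ, ((p^N : ℕ) : ℚ_[p]) = ((p : ℚ_[p]))^N := by
      intro N; push_cast; ring
    simp only [hc]
    apply tendsto_pow_atTop_nhds_zero_of_norm_lt_one
    rw [Padic.norm_p]
    have h1 : (1 : ℝ) < p := by
      exact_mod_cast (Fact.out (p := p.Prime)).one_lt
    exact inv_lt_one_of_one_lt₀ h1
  have hlimT : Tendsto (fun N : ℕ => Tf n ((p^N : ℕ) : ℚ_[p])) atTop
      (nhds ((-1/2 : ℚ_[p])^n)) := by
    have h := ((Tf_continuous (p := p) n).tendsto 0).comp hlim0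
    rwa [Tf_zero] at h
  have final := (hlimT.const_mul (1/2 : ℚ_[p])).const_add ((-1 : ℚ_[p])^n/2^(n+1))
  have hv : ((-1 : ℚ_[p])^n/2^(n+1) + 1/2 * (-1/2 : ℚ_[p])^n) = (-1)^n / 2^n := by
    rw [div_pow]
    have h2 : (2 : ℚ_[p]) ≠ 0 := two_ne_zero
    field_simp
    ring
  rw [← hv]
  simp only [hfact, hkey]
  exact final
end
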